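/- Let G = (V,E) be a finite simple undirected graph with positive edge weights and unique shortest paths, let s, v, t be vertices with d_G(v,t) ≤ d_G(v,s), and let f ∈ E be an edge lying on the unique shortest path π(s,v) such that s and v are connected in G − f. Then d_{G−f}(s,t) + d_{G−f}(v,t) ≤ 5 · d_{G−f}(s,v). (This is the mathematical core of Lemma 3.1 / Theorem 1: the distance estimate returned via the vertex t nearest to v has multiplicative stretch at most 5.) -/

import Mathlib

/-!
Write `D = d_{G-f}(s,v)`, so that `d_G(v,t) ≤ d_G(s,v) ≤ D`. It suffices to show
`d_{G-f}(s,t) ≤ 2D`, because then `d_{G-f}(v,t) ≤ D + 2D`. If `π(v,t)` avoids `f`, then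
`d_{G-f}(s,t) ≤ D + d_G(v,t)`. Otherwise write `π(s,v) = s ⇝ a - b ⇝ v` with `f = ab`.
By uniqueness of shortest paths, `π(v,t)` crosses `f` from `b` to `a`: otherwise its prefix
`v ⇝ a` would be the reverse of the suffix `a - b ⇝ v` of `π(s,v)`, which contains `f`.
Hence `s ⇝ a` (on `π(s,v)`) followed by `a ⇝ t` (on `π(v,t)`) avoids `f` and has weight at
most `d_G(s,v) + d_G(v,t) ≤ 2D`.
-/

open scoped ENNReal

variable {V : Type*}

/-- The total weight of a walk: the sum of the weights of its edges (in `ℝ≥0∞`). -/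
noncomputable def walkWeight {G : SimpleGraph V} (wt : Sym2 V → NNReal)
    {u v : V} (p : G.Walk u v) : ℝ≥0∞ :=
  (p.edges.map (fun e => (wt e : ℝ≥0∞))).sum

/-- The weighted shortest-path distance: the infimum over all walks from `u` to `v`
of their total weight (in `ℝ≥0∞`, so it is `∞` if `u` and `v` are not connected). -/
noncomputable def wdist (G : SimpleGraph V) (wt : Sym2 V → NNReal) (u v : V) : ℝ≥0∞ :=
  ⨅ p : G.Walk u v, walkWeight wt p

/-- `G` has unique shortest paths: for every pair of connected vertices there is exactly
one walk of minimum total weight. -/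
def HasUniqueShortestPaths (G : SimpleGraph V) (wt : Sym2 V → NNReal) : Prop :=
  ∀ u v : V, G.Reachable u v →
    ∃! p : G.Walk u v, walkWeight wt p = wdist G wt u v

open SimpleGraph

section

variable {G : SimpleGraph V} {wt : Sym2 V → NNReal}

lemma walkWeight_cons {u v w : V} (h : G.Adj u v) (p : G.Walk v w) :
    walkWeight wt (Walk.cons h p) = (wt s(u, v) : ℝ≥0∞) + walkWeight wt p := by
  simp [walkWeight]

lemma walkWeight_append {u v w : V} (p : G.Walk u v) (q : G.Walk v w) :
    walkWeight wt (p.append q) = walkWeight wt p + walkWeight wt q := by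
  simp [walkWeight]

lemma walkWeight_reverse {u v : V} (p : G.Walk u v) :
    walkWeight wt p.reverse = walkWeight wt p := by
  simp [walkWeight, List.sum_reverse]

lemma walkWeight_transfer {H : SimpleGraph V} {u v : V} (p : G.Walk u v)
    (hp : ∀ e ∈ p.edges, e ∈ H.edgeSet) :
    walkWeight wt (p.transfer H hp) = walkWeight wt p := by
  simp [walkWeight, Walk.edges_transfer]

lemma walkWeight_ne_top {u v : V} (p : G.Walk u v) : walkWeight wt p ≠ ⊤ := by
  induction p with
  | nil => simp [walkWeight]
  | cons h q ih => simpa [walkWeight_cons] using ih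

lemma walkWeight_bypass_le [DecidableEq V] {u v : V} (p : G.Walk u v) :
    walkWeight wt p.bypass ≤ walkWeight wt p := by
  obtain ⟨l, hl, hsub⟩ := p.bypass_isPath.edges_nodup.subperm p.edges_bypass_subset_edges
  rw [walkWeight, walkWeight, ← (hl.map _).sum_eq]
  exact (hsub.map _).sum_le_sum fun _ _ => bot_le

lemma wdist_le_walkWeight {u v : V} (p : G.Walk u v) : wdist G wt u v ≤ walkWeight wt p :=
  iInf_le _ _

lemma wdist_comm (u v : V) : wdist G wt u v = wdist G wt v u := by
  have h : ∀ a b : V, wdist G wt a b ≤ wdist G wt b a := fun a b =>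
    le_iInf fun p => (wdist_le_walkWeight p.reverse).trans (walkWeight_reverse p).le
  exact le_antisymm (h u v) (h v u)

lemma wdist_triangle (u v w : V) :
    wdist G wt u w ≤ wdist G wt u v + wdist G wt v w := by
  simp only [wdist, ENNReal.iInf_add, ENNReal.add_iInf]
  exact le_iInf₂ fun p₂ p₁ =>
    (wdist_le_walkWeight (p₁.append p₂)).trans (walkWeight_append p₁ p₂).le

lemma reachable_of_wdist_ne_top {u v : V} (h : wdist G wt u v ≠ ⊤) : G.Reachable u v := by
  by_contra hn
  have : IsEmpty (G.Walk u v) := ⟨fun p => hn ⟨p⟩⟩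
  exact h (iInf_of_empty _)

lemma wdist_le_wdist_of_le {H : SimpleGraph V} (hHG : H ≤ G) (u v : V) :
    wdist G wt u v ≤ wdist H wt u v :=
  le_iInf fun p => (wdist_le_walkWeight (p.transfer G fun _ he =>
    edgeSet_mono hHG (p.edges_subset_edgeSet he))).trans (walkWeight_transfer _ _).le

lemma wdist_deleteEdges_le_walkWeight {f : Sym2 V} {u v : V} (p : G.Walk u v)
    (hfp : f ∉ p.edges) : wdist (G.deleteEdges {f}) wt u v ≤ walkWeight wt p :=
  (wdist_le_walkWeight (p.toDeleteEdge f hfp)).trans (walkWeight_transfer _ _).le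

lemma walkWeight_eq_wdist_of_append {u a v : V} {p : G.Walk u a} {q : G.Walk a v}
    (h : walkWeight wt (p.append q) = wdist G wt u v) :
    walkWeight wt p = wdist G wt u a ∧ walkWeight wt q = wdist G wt a v := by
  rw [walkWeight_append] at h
  have hsum : walkWeight wt p + walkWeight wt q ≤ wdist G wt u a + wdist G wt a v :=
    h ▸ wdist_triangle u a v
  have hp := wdist_le_walkWeight (wt := wt) p
  have hq := wdist_le_walkWeight (wt := wt) q
  refine ⟨le_antisymm ?_ hp, le_antisymm ?_ hq⟩
  · exact ENNReal.le_of_add_le_add_right (walkWeight_ne_top q)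
      (hsum.trans (add_le_add le_rfl hq))
  · exact ENNReal.le_of_add_le_add_left (walkWeight_ne_top p)
      (hsum.trans (add_le_add hp le_rfl))

lemma SimpleGraph.Walk.exists_eq_append_cons_of_mem_edges {f : Sym2 V} {u v : V}
    (p : G.Walk u v) (hp : p.edges.Nodup) (hf : f ∈ p.edges) :
    ∃ (a b : V) (hab : G.Adj a b) (p₁ : G.Walk u a) (p₂ : G.Walk b v),
      p = p₁.append (Walk.cons hab p₂) ∧ f = s(a, b) ∧ f ∉ p₁.edges ∧ f ∉ p₂.edges := by
  induction p with
  | nil => simp at hf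
  | @cons x y w h q ih =>
    rw [Walk.edges_cons, List.nodup_cons] at hp
    rw [Walk.edges_cons, List.mem_cons] at hf
    rcases hf with rfl | hf
    · exact ⟨x, y, h, Walk.nil, q, rfl, rfl, by simp, hp.1⟩
    · obtain ⟨a, b, hab, p₁, p₂, rfl, rfl, hf₁, hf₂⟩ := ih hp.2 hf
      refine ⟨a, b, hab, Walk.cons h p₁, p₂, rfl, rfl, ?_, hf₂⟩
      rw [Walk.edges_cons, List.mem_cons, not_or]
      exact ⟨fun he => hp.1 (he ▸ hf), hf₁⟩

variable (huniq : HasUniqueShortestPaths G wt)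
include huniq

lemma SimpleGraph.Walk.isPath_of_walkWeight_eq_wdist {u v : V} (p : G.Walk u v)
    (hp : walkWeight wt p = wdist G wt u v) : p.IsPath := by
  classical
  obtain ⟨q, _, hq⟩ := huniq u v ⟨p⟩
  have hb : walkWeight wt p.bypass = wdist G wt u v :=
    le_antisymm ((walkWeight_bypass_le p).trans hp.le) (wdist_le_walkWeight _)
  rw [(hq p hp).trans (hq p.bypass hb).symm]
  exact p.bypass_isPath

lemma SimpleGraph.Walk.reverse_eq_of_walkWeight_eq_wdist {u v : V}
    (p : G.Walk u v) (q : G.Walk v u)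
    (hp : walkWeight wt p = wdist G wt u v) (hq : walkWeight wt q = wdist G wt v u) :
    p.reverse = q := by
  obtain ⟨r, _, hr⟩ := huniq v u ⟨q⟩
  have hp' : walkWeight wt p.reverse = wdist G wt v u := by
    rw [walkWeight_reverse, hp, wdist_comm]
  exact (hr _ hp').trans (hr _ hq).symm

lemma exists_wdist_deleteEdges_le_of_mem_edges {f : Sym2 V} {s v t : V}
    (q : G.Walk s v) (hq : walkWeight wt q = wdist G wt s v) (hfq : f ∈ q.edges)
    (p : G.Walk v t) (hp : walkWeight wt p = wdist G wt v t) (hfp : f ∈ p.edges) :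
    ∃ y, wdist (G.deleteEdges {f}) wt s y ≤ wdist G wt s v ∧
      wdist (G.deleteEdges {f}) wt y t ≤ wdist G wt v t := by
  obtain ⟨a, b, hab, q₁, q₂, rfl, rfl, hfq₁, -⟩ := q.exists_eq_append_cons_of_mem_edges
    (q.isPath_of_walkWeight_eq_wdist huniq hq).edges_nodup hfq
  obtain ⟨x, y, hxy, p₁, p₂, rfl, hf, hfp₁, hfp₂⟩ := p.exists_eq_append_cons_of_mem_edges
    (p.isPath_of_walkWeight_eq_wdist huniq hp).edges_nodup hfp
  rcases Sym2.eq_iff.1 hf with ⟨rfl, rfl⟩ | ⟨rfl, rfl⟩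
  · have hrev := p₁.reverse_eq_of_walkWeight_eq_wdist huniq (Walk.cons hab q₂)
      (walkWeight_eq_wdist_of_append hp).1 (walkWeight_eq_wdist_of_append hq).2
    refine absurd ?_ hfp₁
    rw [← List.mem_reverse, ← Walk.edges_reverse, hrev, Walk.edges_cons]
    exact List.mem_cons_self
  · refine ⟨a, ?_, ?_⟩
    · calc wdist (G.deleteEdges {s(a, b)}) wt s a ≤ walkWeight wt q₁ :=
            wdist_deleteEdges_le_walkWeight q₁ hfq₁
        _ ≤ walkWeight wt (q₁.append (Walk.cons hab q₂)) := by
            rw [walkWeight_append]; exact le_self_add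
        _ = wdist G wt s v := hq
    · calc wdist (G.deleteEdges {s(a, b)}) wt a t ≤ walkWeight wt p₂ :=
            wdist_deleteEdges_le_walkWeight p₂ hfp₂
        _ ≤ walkWeight wt (p₁.append (Walk.cons hxy p₂)) := by
            rw [walkWeight_append, walkWeight_cons, ← add_assoc]; exact le_add_self
        _ = wdist G wt v t := hp

lemma wdist_deleteEdges_le_two_mul {f : Sym2 V} {s v t : V}
    (q : G.Walk s v) (hq : walkWeight wt q = wdist G wt s v) (hfq : f ∈ q.edges)
    (hvt : wdist G wt v t ≤ wdist G wt v s) :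
    wdist (G.deleteEdges {f}) wt s t ≤ 2 * wdist (G.deleteEdges {f}) wt s v := by
  set D := wdist (G.deleteEdges {f}) wt s v
  have hsv : wdist G wt s v ≤ D := wdist_le_wdist_of_le (G.deleteEdges_le _) s v
  obtain ⟨y, hsy, hyt⟩ : ∃ y, wdist (G.deleteEdges {f}) wt s y ≤ D ∧
      wdist (G.deleteEdges {f}) wt y t ≤ wdist G wt v t := by
    have hreach : G.Reachable v t := reachable_of_wdist_ne_top (wt := wt) <|
      ne_top_of_le_ne_top (walkWeight_ne_top q.reverse) (hvt.trans (wdist_le_walkWeight _))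
    obtain ⟨p, hp, -⟩ := huniq v t hreach
    by_cases hfp : f ∈ p.edges
    · obtain ⟨y, hsy, hyt⟩ :=
        exists_wdist_deleteEdges_le_of_mem_edges huniq q hq hfq p hp hfp
      exact ⟨y, hsy.trans hsv, hyt⟩
    · exact ⟨v, le_rfl, (wdist_deleteEdges_le_walkWeight p hfp).trans hp.le⟩
  calc wdist (G.deleteEdges {f}) wt s t ≤ D + wdist G wt v s :=
        (wdist_triangle s y t).trans (add_le_add hsy (hyt.trans hvt))
    _ ≤ D + D := by rw [wdist_comm]; exact add_le_add le_rfl hsv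
    _ = 2 * D := (two_mul D).symm

end

theorem stmt10_general (G : SimpleGraph V) (wt : Sym2 V → NNReal)
    (huniq : HasUniqueShortestPaths G wt)
    (s v t : V) (hvt : wdist G wt v t ≤ wdist G wt v s)
    (f : Sym2 V)
    (qsv : G.Walk s v) (hqsv : walkWeight wt qsv = wdist G wt s v)
    (hfq : f ∈ qsv.edges) :
    wdist (G.deleteEdges {f}) wt s t + wdist (G.deleteEdges {f}) wt v t ≤
      5 * wdist (G.deleteEdges {f}) wt s v := by
  set D := wdist (G.deleteEdges {f}) wt s v
  have hst : wdist (G.deleteEdges {f}) wt s t ≤ 2 * D :=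
    wdist_deleteEdges_le_two_mul huniq qsv hqsv hfq hvt
  calc wdist (G.deleteEdges {f}) wt s t + wdist (G.deleteEdges {f}) wt v t
      ≤ 2 * D + (D + 2 * D) := by
        refine add_le_add hst ((wdist_triangle v s t).trans (add_le_add ?_ hst))
        rw [wdist_comm]
    _ = 5 * D := by ring

theorem stmt10 [Fintype V] [DecidableEq V] (G : SimpleGraph V) (wt : Sym2 V → NNReal)
    (hwt : ∀ e ∈ G.edgeSet, 0 < wt e)
    (huniq : HasUniqueShortestPaths G wt)
    (s v t : V) (hvt : wdist G wt v t ≤ wdist G wt v s)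
    (f : Sym2 V) (hf : f ∈ G.edgeSet)
    (qsv : G.Walk s v) (hqsv : walkWeight wt qsv = wdist G wt s v)
    (hfq : f ∈ qsv.edges)
    (hconn : (G.deleteEdges {f}).Reachable s v) :
    wdist (G.deleteEdges {f}) wt s t + wdist (G.deleteEdges {f}) wt v t ≤
      5 * wdist (G.deleteEdges {f}) wt s v :=
  stmt10_general G wt huniq s v t hvt f qsv hqsv hfq
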